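/- arXiv:2603.15063 — 7 statements merged into one kernel-verified Lean document; each statement's English description precedes it below -/
import Mathlib

section
/- Let ℐ = C ⊕ [±Δ] be an interval matrix of size l×p (Δ ≥ 0 entrywise) and let ℳ = ⟨M; G_1,…,G_g⟩ be a matrix zonotope of size p×q. Then the product set ℐℳ = {IN : I ∈ ℐ, N ∈ ℳ} is contained in the matrix zonotope 𝕋_ℐ(ℳ) = ⟨CM; CG_1,…,CG_g, F^(1),…,F^(lq)⟩, where F = Δ(|M| + Σ_{j=1}^g |G_j|) and (F^(k))_k = E(F). -/
open Matrix Finset Pointwise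

noncomputable section

/-- entrywise absolute value of a real matrix -/
def matAbs {ι κ : Type*} (M : Matrix ι κ ℝ) : Matrix ι κ ℝ := fun i j => |M i j|

/-- interval matrix `C ⊕ [±Δ] = {C + D : |D| ≤ Δ}` -/
def intervalMat {ι κ : Type*} (C Δ : Matrix ι κ ℝ) : Set (Matrix ι κ ℝ) :=
  {X | ∀ i j, |X i j - C i j| ≤ Δ i j}

/-- representation of a matrix zonotope: a center and a list of generators -/
structure ZRep (ι κ : Type*) where
  c : Matrix ι κ ℝ
  g : List (Matrix ι κ ℝ)

/-- the set of matrices described by a matrix zonotope representation -/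
def ZRep.set {ι κ : Type*} (Z : ZRep ι κ) : Set (Matrix ι κ ℝ) :=
  {X | ∃ β : Fin Z.g.length → ℝ, (∀ i, |β i| ≤ 1) ∧ X = Z.c + ∑ i, β i • Z.g.get i}

/-- interval hull `box(⟨M;G⟩) = M ⊕ [± Σ |G_i|]` of a matrix zonotope -/
def ZRep.box {ι κ : Type*} (Z : ZRep ι κ) : Set (Matrix ι κ ℝ) :=
  intervalMat Z.c ((Z.g.map matAbs).sum)

/-- the family `E(F)` of single-entry matrices, as a list -/
def EList {ι κ : Type*} [Fintype ι] [Fintype κ] [DecidableEq ι] [DecidableEq κ]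
    (F : Matrix ι κ ℝ) : List (Matrix ι κ ℝ) :=
  (Finset.univ : Finset (ι × κ)).toList.map fun p => Matrix.single p.1 p.2 (F p.1 p.2)

/-- the operator `𝕋_ℐ` (for `ℐ = C ⊕ [±Δ]`) acting on zonotope representations:
`𝕋_ℐ(⟨M;G₁,…,G_g⟩) = ⟨CM; CG₁,…,CG_g, E(Δ(|M|+Σ|G_i|))⟩` -/
def Tstep {ι κ μ : Type*} [Fintype ι] [Fintype κ] [Fintype μ] [DecidableEq ι] [DecidableEq μ]
    (C Δ : Matrix ι κ ℝ) (Z : ZRep κ μ) : ZRep ι μ :=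
  ⟨C * Z.c, Z.g.map (fun G => C * G) ++ EList (Δ * (matAbs Z.c + (Z.g.map matAbs).sum))⟩

/-!
Write `I N = C N + (I - C) N`. Multiplication by `C` maps `⟨M; G₁,…,G_g⟩` onto
`⟨CM; CG₁,…,CG_g⟩`. For the remainder, `N` lies in the interval hull `M ⊕ [±Σ|Gᵢ|]`, so
`|(I - C) N| ≤ Δ (|M| + Σ|Gᵢ|) = F` entrywise, and a matrix dominated entrywise by `F` is a
combination of the single-entry matrices `E(F)` with coefficients in `[-1, 1]`. Finally, Minkowski
sums of matrix zonotopes concatenate the generators.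
-/

lemma abs_le_of_mem_intervalMat {ι κ : Type*} {C Δ X : Matrix ι κ ℝ} (hX : X ∈ intervalMat C Δ)
    (i : ι) (j : κ) : |X i j| ≤ (matAbs C + Δ) i j :=
  calc |X i j| = |C i j + (X i j - C i j)| := by rw [add_sub_cancel]
    _ ≤ |C i j| + |X i j - C i j| := abs_add_le _ _
    _ ≤ |C i j| + Δ i j := by gcongr; exact hX i j

lemma abs_mul_apply_le {ι κ μ : Type*} [Fintype κ] {D A : Matrix ι κ ℝ} {N B : Matrix κ μ ℝ}
    (hD : ∀ i k, |D i k| ≤ A i k) (hN : ∀ k j, |N k j| ≤ B k j) (i : ι) (j : μ) :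
    |(D * N) i j| ≤ (A * B) i j :=
  calc |∑ k, D i k * N k j| ≤ ∑ k, |D i k * N k j| := Finset.abs_sum_le_sum_abs _ _
    _ ≤ ∑ k, A i k * B k j := Finset.sum_le_sum fun k _ => by
        rw [abs_mul]
        exact mul_le_mul (hD i k) (hN k j) (abs_nonneg _) ((abs_nonneg _).trans (hD i k))

namespace ZRep

variable {ι κ μ : Type*}

lemma sum_map_matAbs_apply (g : List (Matrix ι κ ℝ)) (i : ι) (j : κ) :
    (g.map matAbs).sum i j = ∑ k : Fin g.length, |g[k] i j| := by
  rw [← Fin.sum_univ_fun_getElem, Matrix.sum_apply]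
  rfl

lemma set_subset_box (Z : ZRep ι κ) : Z.set ⊆ Z.box := by
  rintro _ ⟨β, hβ, rfl⟩ i j
  rw [sum_map_matAbs_apply, Matrix.add_apply, add_sub_cancel_left, Matrix.sum_apply]
  calc |∑ k, (β k • Z.g.get k) i j| ≤ ∑ k, |(β k • Z.g.get k) i j| :=
        Finset.abs_sum_le_sum_abs _ _
    _ ≤ ∑ k : Fin Z.g.length, |Z.g[k] i j| := by
        refine Finset.sum_le_sum fun k _ => ?_
        rw [Matrix.smul_apply, smul_eq_mul, abs_mul]
        exact mul_le_of_le_one_left (abs_nonneg _) (hβ k)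

lemma mem_set_map {α : Type*} (c : Matrix ι κ ℝ) (l : List α) (f : α → Matrix ι κ ℝ)
    (β : Fin l.length → ℝ) (hβ : ∀ i, |β i| ≤ 1) :
    c + ∑ i, β i • f l[(i : ℕ)] ∈ (⟨c, l.map f⟩ : ZRep ι κ).set := by
  have hlen : (l.map f).length = l.length := List.length_map f
  refine ⟨fun i => β (Fin.cast hlen i), fun i => hβ _, ?_⟩
  congr 1
  exact (Fintype.sum_equiv (finCongr hlen) _ _ fun i => by simp).symm

lemma add_mem_set_append {c₁ c₂ X₁ X₂ : Matrix ι κ ℝ} {g₁ g₂ : List (Matrix ι κ ℝ)}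
    (h₁ : X₁ ∈ (⟨c₁, g₁⟩ : ZRep ι κ).set) (h₂ : X₂ ∈ (⟨c₂, g₂⟩ : ZRep ι κ).set) :
    X₁ + X₂ ∈ (⟨c₁ + c₂, g₁ ++ g₂⟩ : ZRep ι κ).set := by
  obtain ⟨β₁, hβ₁, rfl⟩ := h₁
  obtain ⟨β₂, hβ₂, rfl⟩ := h₂
  have hlen : (g₁ ++ g₂).length = g₁.length + g₂.length := List.length_append
  have hβ : ∀ i, |Fin.append β₁ β₂ i| ≤ 1 := Fin.addCases (by simpa using hβ₁) (by simpa using hβ₂)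
  refine ⟨fun i => Fin.append β₁ β₂ (Fin.cast hlen i), fun i => hβ _, ?_⟩
  simp only
  rw [Fintype.sum_equiv (finCongr hlen)
    (fun i => Fin.append β₁ β₂ (Fin.cast hlen i) • (g₁ ++ g₂).get i)
    (fun i => Fin.append β₁ β₂ i • (g₁ ++ g₂)[(i : ℕ)]'(by omega)) fun i => rfl,
    Fin.sum_univ_add]
  simp only [List.get_eq_getElem, Fin.append_left, Fin.val_castAdd, Fin.is_lt,
    List.getElem_append_left, Fin.append_right, Fin.val_natAdd, le_add_iff_nonneg_right, zero_le,
    List.getElem_append_right, add_tsub_cancel_left]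
  abel

lemma mul_mem_set_map_mul [Fintype ι] (C : Matrix μ ι ℝ) {Z : ZRep ι κ} {N : Matrix ι κ ℝ}
    (hN : N ∈ Z.set) : C * N ∈ (⟨C * Z.c, Z.g.map (fun G => C * G)⟩ : ZRep μ κ).set := by
  obtain ⟨β, hβ, rfl⟩ := hN
  simpa [Matrix.mul_add, Matrix.mul_sum] using mem_set_map (C * Z.c) Z.g (fun G => C * G) β hβ

lemma mem_set_EList [Fintype ι] [Fintype κ] [DecidableEq ι] [DecidableEq κ]
    {X F : Matrix ι κ ℝ} (hXF : ∀ i j, |X i j| ≤ F i j) :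
    X ∈ (⟨0, EList F⟩ : ZRep ι κ).set := by
  -- Where `F p = 0` the bound forces `X p = 0`, so the junk value `X p / 0 = 0` does no harm.
  set γ : ι × κ → ℝ := fun p => X p.1 p.2 / F p.1 p.2
  have hγ : ∀ p, |γ p| ≤ 1 := fun p => by
    rw [abs_div]
    exact div_le_one_of_le₀ ((hXF _ _).trans (le_abs_self _)) (abs_nonneg _)
  have hX : X = ∑ p : ι × κ, γ p • single p.1 p.2 (F p.1 p.2) := by
    have hcancel : ∀ p : ι × κ, γ p • single p.1 p.2 (F p.1 p.2) = single p.1 p.2 (X p.1 p.2) :=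
      fun p => by
        rw [smul_single, smul_eq_mul,
          div_mul_cancel_of_imp fun h => abs_nonpos_iff.mp (h ▸ hXF _ _)]
    rw [Finset.sum_congr rfl fun p _ => hcancel p, ← Finset.univ_product_univ, Finset.sum_product]
    exact matrix_eq_sum_single X
  have := mem_set_map 0 Finset.univ.toList (fun p : ι × κ => single p.1 p.2 (F p.1 p.2))
    (fun i => γ Finset.univ.toList[(i : ℕ)]) fun i => hγ _
  rwa [Fin.sum_univ_fun_getElem (f := fun p => γ p • single p.1 p.2 (F p.1 p.2)),
    Finset.sum_map_toList, zero_add, ← hX] at this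

end ZRep

theorem stmt0_general {l p q : ℕ} (C Δ : Matrix (Fin l) (Fin p) ℝ)
    (Z : ZRep (Fin p) (Fin q)) :
    {X : Matrix (Fin l) (Fin q) ℝ | ∃ I ∈ intervalMat C Δ, ∃ N ∈ Z.set, X = I * N} ⊆
      (Tstep C Δ Z).set := by
  rintro _ ⟨I, hI, N, hN, rfl⟩
  have hsplit : I * N = C * N + (I - C) * N := by rw [Matrix.sub_mul, add_sub_cancel]
  have hbound : ∀ i j, |((I - C) * N) i j| ≤ (Δ * (matAbs Z.c + (Z.g.map matAbs).sum)) i j :=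
    abs_mul_apply_le (fun i k => hI i k) (abs_le_of_mem_intervalMat (Z.set_subset_box hN))
  have hmem := ZRep.add_mem_set_append (ZRep.mul_mem_set_map_mul C hN) (ZRep.mem_set_EList hbound)
  rw [add_zero, ← hsplit] at hmem
  exact hmem

/-- Proposition 1: `ℐℳ ⊆ 𝕋_ℐ(ℳ)`. -/
theorem stmt0 {l p q : ℕ} (C Δ : Matrix (Fin l) (Fin p) ℝ) (hΔ : ∀ i j, 0 ≤ Δ i j)
    (Z : ZRep (Fin p) (Fin q)) :
    {X : Matrix (Fin l) (Fin q) ℝ | ∃ I ∈ intervalMat C Δ, ∃ N ∈ Z.set, X = I * N} ⊆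
      (Tstep C Δ Z).set :=
  stmt0_general C Δ Z
end
end

section
/- Data-driven interval bound on the system matrices: let Φ ∈ ℝ^{(n+m)×T}, X₊ ∈ ℝ^{n×T}, w̄ ∈ ℝ^n with w̄ ≥ 0, and suppose Ψ ∈ ℝ^{T×(n+m)} is a right inverse of Φ, i.e. ΦΨ = I_{n+m}. If Θ ∈ ℝ^{n×(n+m)} satisfies |X₊ − ΘΦ| ≤ w̄ 𝟙ᵀ entrywise (𝟙 ∈ ℝ^T the all-ones vector), then |Θ − X₊Ψ| ≤ w̄ 𝟙ᵀ |Ψ| entrywise; equivalently, every Θ compatible with the data lies in the interval matrix X₊Ψ ⊕ [±Δ_S] with Δ_S = w̄ 𝟙ᵀ |Ψ|. -/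
/- Since `ΦΨ = 1`, the deviation `Θ - X₊Ψ` equals the residual `(ΘΦ - X₊)Ψ`, whose rows are bounded
entrywise by `w̄`; the triangle inequality over the `T` columns of the data gives the bound. -/

open Matrix Finset Pointwise

noncomputable section

theorem Matrix.sub_mul_eq_of_mul_eq_one {ι κ ν R : Type*} [Fintype κ] [Fintype ν] [DecidableEq κ]
    [Ring R] {Φ : Matrix κ ν R} {Ψ : Matrix ν κ R} (hΨ : Φ * Ψ = 1)
    (Θ : Matrix ι κ R) (X : Matrix ι ν R) :
    Θ - X * Ψ = (Θ * Φ - X) * Ψ := by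
  rw [Matrix.sub_mul, Matrix.mul_assoc, hΨ, Matrix.mul_one]

theorem Matrix.abs_mul_apply_le_of_abs_le {ι κ μ R : Type*} [Fintype κ]
    [CommRing R] [LinearOrder R] [IsStrictOrderedRing R]
    {A : Matrix ι κ R} {r : R} {i : ι} (hA : ∀ k, |A i k| ≤ r) (B : Matrix κ μ R) (j : μ) :
    |(A * B) i j| ≤ r * ∑ k, |B k j| :=
  calc |(A * B) i j| ≤ ∑ k, |A i k * B k j| := Finset.abs_sum_le_sum_abs _ _
    _ ≤ ∑ k, r * |B k j| := by
      gcongr with k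
      rw [abs_mul]
      exact mul_le_mul_of_nonneg_right (hA k) (abs_nonneg _)
    _ = r * ∑ k, |B k j| := (Finset.mul_sum _ _ _).symm

theorem stmt2_general {n m T : ℕ} (Φ : Matrix (Fin (n + m)) (Fin T) ℝ)
    (Xp : Matrix (Fin n) (Fin T) ℝ) (wbar : Fin n → ℝ)
    (Ψ : Matrix (Fin T) (Fin (n + m)) ℝ) (hΨ : Φ * Ψ = 1)
    (Θ : Matrix (Fin n) (Fin (n + m)) ℝ)
    (hΘ : ∀ i j, |(Xp - Θ * Φ) i j| ≤ wbar i) :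
    Θ ∈ intervalMat (Xp * Ψ) (fun i j => wbar i * ∑ k, |Ψ k j|) := by
  intro i j
  have hres : ∀ k, |(Θ * Φ - Xp) i k| ≤ wbar i := fun k => by
    rw [← abs_neg, ← Matrix.neg_apply, neg_sub]
    exact hΘ i k
  show |(Θ - Xp * Ψ) i j| ≤ _
  rw [Matrix.sub_mul_eq_of_mul_eq_one hΨ]
  exact Matrix.abs_mul_apply_le_of_abs_le hres Ψ j

/-- Proposition 2: every `Θ` compatible with the data lies in the
interval matrix `X₊Ψ ⊕ [±Δ_S]` with `Δ_S = w̄ 𝟙ᵀ |Ψ|`. -/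
theorem stmt2 {n m T : ℕ} (Φ : Matrix (Fin (n + m)) (Fin T) ℝ)
    (Xp : Matrix (Fin n) (Fin T) ℝ) (wbar : Fin n → ℝ) (hw : ∀ i, 0 ≤ wbar i)
    (Ψ : Matrix (Fin T) (Fin (n + m)) ℝ) (hΨ : Φ * Ψ = 1)
    (Θ : Matrix (Fin n) (Fin (n + m)) ℝ)
    (hΘ : ∀ i j, |(Xp - Θ * Φ) i j| ≤ wbar i) :
    Θ ∈ intervalMat (Xp * Ψ) (fun i j => wbar i * ∑ k, |Ψ k j|) :=
  stmt2_general Φ Xp wbar Ψ hΨ Θ hΘ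
end
end

section
/- Let Â ∈ ℝ^{n×n}, let Δ_K ∈ ℝ^{n×n} and Δ_S ∈ ℝ^{n×p} with Δ_K ≥ 0 and Δ_S ≥ 0 entrywise, and define F_0 = Δ_S and F_{j+1} = Δ_K Σ_{i=0}^{j} |Â^{j−i}| F_i for j ≥ 0. Let ℐ_A = Â ⊕ [±Δ_K] and let ℐ_Δ be the matrix zonotope ⟨0; E(Δ_S)⟩. Then for every j ≥ 0 the interval hull of the j-fold iterate satisfies box(𝕋_{ℐ_A}^j(ℐ_Δ)) = [± Σ_{i=0}^{j} |Â^{j−i}| F_i ] (equality of sets of n×p matrices). -/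
/-! Every iterate has centre `Â^j · 0 = 0`, so its box has radius `Σ_G |G|` over its generators.
Track more generally `Σ_G |B G|` for an arbitrary left factor `B`: one step of `𝕋` turns it into
the same sum for `B Â` plus `|B| F_{j+1}`, because the single-entry generators `E(F)` contribute
`Σ_k |B F^(k)| = |B| |F|`, and `F_{j+1} = Δ_K (Σ_G |G|)` is entrywise nonnegative. Unrolling gives
`Σ_i |B Â^{j-i}| F_i`, and `B = 1` is the claim. -/

open Matrix Finset Pointwise

noncomputable section

section ZonotopeIteration

variable {ι κ μ : Type*}

lemma matAbs_zero : matAbs (0 : Matrix ι κ ℝ) = 0 := by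
  ext i j; simp [matAbs]

lemma matAbs_of_nonneg {M : Matrix ι κ ℝ} (hM : ∀ i j, 0 ≤ M i j) : matAbs M = M := by
  ext i j; exact abs_of_nonneg (hM i j)

lemma matAbs_mul_of_nonneg [Fintype κ] {A : Matrix ι κ ℝ} {B : Matrix κ μ ℝ}
    (hA : ∀ i j, 0 ≤ A i j) (hB : ∀ i j, 0 ≤ B i j) : matAbs (A * B) = A * B :=
  matAbs_of_nonneg fun i j => Finset.sum_nonneg fun k _ => mul_nonneg (hA i k) (hB k j)

variable [Fintype κ]

lemma matAbs_mul_single [DecidableEq κ] [DecidableEq μ] (B : Matrix ι κ ℝ) (k : κ) (l : μ)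
    (v : ℝ) :
    matAbs (B * single k l v) = matAbs B * single k l |v| := by
  ext a b
  by_cases hb : b = l
  · subst hb; simp [matAbs, abs_mul]
  · simp [matAbs, hb]

lemma sum_map_matAbs_mul_EList [Fintype μ] [DecidableEq κ] [DecidableEq μ] (B : Matrix ι κ ℝ)
    (M : Matrix κ μ ℝ) :
    ((EList M).map fun G => matAbs (B * G)).sum = matAbs B * matAbs M := by
  simp only [EList, List.map_map, Function.comp_def, matAbs_mul_single, Finset.sum_map_toList,
    ← Matrix.mul_sum]
  rw [Fintype.sum_prod_type]
  exact congrArg _ (matrix_eq_sum_single (matAbs M)).symm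

def ZRep.absGenSum (B : Matrix ι κ ℝ) (Z : ZRep κ μ) : Matrix ι μ ℝ :=
  (Z.g.map fun G => matAbs (B * G)).sum

lemma ZRep.absGenSum_nonneg (B : Matrix ι κ ℝ) (Z : ZRep κ μ) (i : ι) (j : μ) :
    0 ≤ Z.absGenSum B i j := by
  rw [ZRep.absGenSum]
  induction Z.g with
  | nil => simp
  | cons G L ih =>
    simp only [List.map_cons, List.sum_cons, Matrix.add_apply]
    exact add_nonneg (abs_nonneg _) ih

lemma ZRep.absGenSum_one [DecidableEq κ] (Z : ZRep κ μ) :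
    Z.absGenSum 1 = (Z.g.map matAbs).sum := by
  simp [ZRep.absGenSum]

lemma ZRep.box_eq [DecidableEq κ] (Z : ZRep κ μ) : Z.box = intervalMat Z.c (Z.absGenSum 1) := by
  rw [ZRep.box, ZRep.absGenSum_one]

variable [Fintype μ] [DecidableEq κ] [DecidableEq μ]

lemma Tstep_iterate_c (C Δ : Matrix κ κ ℝ) (Z : ZRep κ μ) (j : ℕ) :
    ((Tstep C Δ)^[j] Z).c = C ^ j * Z.c := by
  induction j with
  | zero => simp
  | succ j ih =>
    rw [Function.iterate_succ_apply', pow_succ', Matrix.mul_assoc, ← ih]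
    rfl

lemma ZRep.absGenSum_Tstep (B : Matrix ι κ ℝ) (C Δ : Matrix κ κ ℝ) (Z : ZRep κ μ) :
    (Tstep C Δ Z).absGenSum B =
      Z.absGenSum (B * C) + matAbs B * matAbs (Δ * (matAbs Z.c + Z.absGenSum 1)) := by
  simp only [ZRep.absGenSum, Tstep, List.map_append, List.sum_append, List.map_map,
    Function.comp_def, Matrix.mul_assoc, sum_map_matAbs_mul_EList]
  simp

lemma ZRep.absGenSum_iterate_Tstep (A ΔK : Matrix κ κ ℝ) (ΔS : Matrix κ μ ℝ)
    (hΔK : ∀ i j, 0 ≤ ΔK i j) (hΔS : ∀ i j, 0 ≤ ΔS i j) (F : ℕ → Matrix κ μ ℝ) (hF0 : F 0 = ΔS)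
    (hF : ∀ j, F (j + 1) = ΔK * ∑ i ∈ range (j + 1), matAbs (A ^ (j - i)) * F i)
    (j : ℕ) (B : Matrix κ κ ℝ) :
    ((Tstep A ΔK)^[j] ⟨0, EList ΔS⟩).absGenSum B =
      ∑ i ∈ range (j + 1), matAbs (B * A ^ (j - i)) * F i := by
  induction j generalizing B with
  | zero =>
    simp [ZRep.absGenSum, sum_map_matAbs_mul_EList, matAbs_of_nonneg hΔS, hF0]
  | succ j ih =>
    set Z := (Tstep A ΔK)^[j] ⟨0, EList ΔS⟩
    have hc : Z.c = 0 := by simp [Z, Tstep_iterate_c]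
    have hnext : matAbs (ΔK * (matAbs Z.c + Z.absGenSum 1)) = F (j + 1) := by
      rw [hc, matAbs_zero, zero_add, matAbs_mul_of_nonneg hΔK (Z.absGenSum_nonneg 1), ih 1, hF]
      simp only [Matrix.one_mul]
    rw [Function.iterate_succ_apply', ZRep.absGenSum_Tstep, hnext, ih, sum_range_succ _ (j + 1),
      Nat.sub_self, pow_zero, Matrix.mul_one]
    congr 1
    refine sum_congr rfl fun i hi => ?_
    rw [Matrix.mul_assoc, ← pow_succ', Nat.sub_add_comm (Nat.lt_succ_iff.mp (mem_range.mp hi))]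

end ZonotopeIteration

/-- Lemma 1: the interval hull of the `j`-fold iterate satisfies
`box(𝕋_{ℐ_A}^j(ℐ_Δ)) = [± Σ_{i=0}^{j} |Â^{j−i}| F_i]`. -/
theorem stmt3 {n p : ℕ} (Ahat ΔK : Matrix (Fin n) (Fin n) ℝ)
    (ΔS : Matrix (Fin n) (Fin p) ℝ) (hΔK : ∀ i j, 0 ≤ ΔK i j) (hΔS : ∀ i j, 0 ≤ ΔS i j)
    (F : ℕ → Matrix (Fin n) (Fin p) ℝ) (hF0 : F 0 = ΔS)
    (hF : ∀ j, F (j + 1) = ΔK * ∑ i ∈ Finset.range (j + 1), matAbs (Ahat ^ (j - i)) * F i) :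
    ∀ j : ℕ, ((Tstep Ahat ΔK)^[j] ⟨0, EList ΔS⟩).box =
      intervalMat 0 (∑ i ∈ Finset.range (j + 1), matAbs (Ahat ^ (j - i)) * F i) := by
  intro j
  rw [ZRep.box_eq, Tstep_iterate_c, Matrix.mul_zero,
    ZRep.absGenSum_iterate_Tstep Ahat ΔK ΔS hΔK hΔS F hF0 hF]
  simp only [Matrix.one_mul]
end
end

section
/- Let Â ∈ ℝ^{n×n}, Δ_K ∈ ℝ^{n×n} with Δ_K ≥ 0, Δ_S ∈ ℝ^{n×p} with Δ_S ≥ 0, and define F_0 = Δ_S and F_{j+1} = Δ_K Σ_{i=0}^{j} |Â^{j−i}| F_i for j ≥ 0. Let ℐ_A = Â ⊕ [±Δ_K] and let ℐ_Δ = ⟨0; E(Δ_S)⟩. Then for every j ≥ 0, the j-fold iterate 𝕋_{ℐ_A}^j(ℐ_Δ) equals, as a set, the matrix zonotope with center 0 and generator family { Â^{j−h} F_h^{(k)} : h = 0,…,j, k = 1,…,np }, where (F_h^{(k)})_k = E(F_h). -/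
/-!
With center `0` the center stays `0`, and `𝕋` multiplies the old generators by `Â` and appends
`E(Δ_K Σ |G|)`. The generators of the `j`-th iterate are `Â^{j-h} F_h^{(k)}` with `F_h ≥ 0`, and
`|Â^m · single a b c| = |Â^m| · single a b c` for `c ≥ 0`; hence `Σ |G| = Σ_h |Â^{j-h}| F_h` and
the appended family is exactly `E(F_{j+1})`.
-/

open Matrix Finset Pointwise

noncomputable section

section MatAbs

variable {ι κ μ : Type*}

lemma matAbs_mul_single_s4 [Fintype κ] [DecidableEq κ] [DecidableEq μ]
    (A : Matrix ι κ ℝ) (a : κ) (b : μ) {c : ℝ} (hc : 0 ≤ c) :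
    matAbs (A * single a b c) = matAbs A * single a b c := by
  funext i j
  by_cases hj : b = j
  · subst hj
    simp [matAbs, mul_apply, single, abs_mul, abs_of_nonneg hc]
  · simp [matAbs, mul_apply, single, hj]

lemma mul_apply_nonneg [Fintype κ] {A : Matrix ι κ ℝ} {B : Matrix κ μ ℝ}
    (hA : ∀ i k, 0 ≤ A i k) (hB : ∀ k j, 0 ≤ B k j) (i : ι) (j : μ) : 0 ≤ (A * B) i j :=
  Finset.sum_nonneg fun k _ => mul_nonneg (hA i k) (hB k j)

end MatAbs

lemma EList_sum {ι κ : Type*} [Fintype ι] [Fintype κ] [DecidableEq ι] [DecidableEq κ]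
    (M : Matrix ι κ ℝ) : (EList M).sum = M := by
  rw [EList, Finset.sum_map_toList, ← Finset.univ_product_univ, Finset.sum_product]
  exact (matrix_eq_sum_single M).symm

lemma list_sum_map_mul_left {ι κ μ : Type*} [Fintype κ] (A : Matrix ι κ ℝ)
    (l : List (Matrix κ μ ℝ)) : (l.map (A * ·)).sum = A * l.sum :=
  (map_list_sum (addMonoidHomMulLeft A) l).symm

lemma list_sum_flatMap {α β : Type*} [AddCommMonoid β] (l : List α) (f : α → List β) :
    (l.flatMap f).sum = (l.map fun a => (f a).sum).sum := by
  rw [List.flatMap, List.sum_flatten, List.map_map]; rfl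

lemma list_sum_map_range {β : Type*} [AddCommMonoid β] (m : ℕ) (g : ℕ → β) :
    ((List.range m).map g).sum = ∑ h ∈ Finset.range m, g h := by
  rw [Finset.sum_eq_multiset_sum]; exact (Multiset.sum_coe _).symm

lemma Tstep_mk_zero {ι κ μ : Type*} [Fintype ι] [Fintype κ] [Fintype μ] [DecidableEq ι]
    [DecidableEq μ] (C Δ : Matrix ι κ ℝ) (G : List (Matrix κ μ ℝ)) :
    Tstep C Δ ⟨0, G⟩ = ⟨0, G.map (C * ·) ++ EList (Δ * (G.map matAbs).sum)⟩ := by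
  simp [Tstep, matAbs_zero]

lemma recursion_nonneg {ι μ : Type*} [Fintype ι] [DecidableEq ι] (A ΔK : Matrix ι ι ℝ)
    (F : ℕ → Matrix ι μ ℝ) (hΔK : ∀ i j, 0 ≤ ΔK i j) (hF0 : ∀ i k, 0 ≤ F 0 i k)
    (hF : ∀ j, F (j + 1) = ΔK * ∑ i ∈ range (j + 1), matAbs (A ^ (j - i)) * F i) :
    ∀ h i k, 0 ≤ F h i k := by
  intro h
  induction h using Nat.strong_induction_on with
  | _ h ih =>
    cases h with
    | zero => exact hF0
    | succ j =>
      rw [hF j]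
      refine mul_apply_nonneg hΔK fun a k => ?_
      rw [Matrix.sum_apply]
      exact Finset.sum_nonneg fun h hh =>
        mul_apply_nonneg (fun _ _ => abs_nonneg _) (ih h (by simpa using hh)) a k

section Iterate

variable {ι μ : Type*} [Fintype ι] [Fintype μ] [DecidableEq ι] [DecidableEq μ]

def iterateGens (A : Matrix ι ι ℝ) (F : ℕ → Matrix ι μ ℝ) (j : ℕ) : List (Matrix ι μ ℝ) :=
  (List.range (j + 1)).flatMap fun h => (EList (F h)).map (A ^ (j - h) * ·)

lemma iterateGens_zero (A : Matrix ι ι ℝ) (F : ℕ → Matrix ι μ ℝ) :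
    iterateGens A F 0 = EList (F 0) := by
  simp [iterateGens]

lemma iterateGens_succ (A : Matrix ι ι ℝ) (F : ℕ → Matrix ι μ ℝ) (j : ℕ) :
    iterateGens A F (j + 1) = (iterateGens A F j).map (A * ·) ++ EList (F (j + 1)) := by
  rw [iterateGens, List.range_succ, List.flatMap_append, List.flatMap_singleton, iterateGens,
    List.map_flatMap]
  congr 1
  · refine List.flatMap_congr fun h hh => ?_
    rw [List.map_map]
    refine List.map_congr_left fun X _ => ?_
    have hle : h ≤ j := Nat.lt_succ_iff.mp (List.mem_range.mp hh)
    change A ^ (j + 1 - h) * X = A * (A ^ (j - h) * X)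
    rw [Nat.succ_sub hle, pow_succ', Matrix.mul_assoc]
  · simp

lemma sum_matAbs_map_mul_EList (A : Matrix ι ι ℝ) {M : Matrix ι μ ℝ} (hM : ∀ i k, 0 ≤ M i k) :
    (((EList M).map (A * ·)).map matAbs).sum = matAbs A * M := by
  have habs : ((EList M).map (A * ·)).map matAbs = (EList M).map (matAbs A * ·) := by
    simp only [EList, List.map_map]
    exact List.map_congr_left fun q _ => matAbs_mul_single_s4 A q.1 q.2 (hM q.1 q.2)
  rw [habs, list_sum_map_mul_left, EList_sum]

lemma sum_matAbs_iterateGens (A : Matrix ι ι ℝ) {F : ℕ → Matrix ι μ ℝ}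
    (hF : ∀ h i k, 0 ≤ F h i k) (j : ℕ) :
    ((iterateGens A F j).map matAbs).sum = ∑ h ∈ range (j + 1), matAbs (A ^ (j - h)) * F h := by
  rw [iterateGens, List.map_flatMap, list_sum_flatMap, list_sum_map_range]
  exact Finset.sum_congr rfl fun h _ => sum_matAbs_map_mul_EList _ (hF h)

lemma Tstep_iterate (A ΔK : Matrix ι ι ℝ) (F : ℕ → Matrix ι μ ℝ)
    (hF_nonneg : ∀ h i k, 0 ≤ F h i k)
    (hF : ∀ j, F (j + 1) = ΔK * ∑ i ∈ range (j + 1), matAbs (A ^ (j - i)) * F i) (j : ℕ) :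
    (Tstep A ΔK)^[j] ⟨0, EList (F 0)⟩ = ⟨0, iterateGens A F j⟩ := by
  induction j with
  | zero => rw [iterateGens_zero]; rfl
  | succ j ih =>
    rw [Function.iterate_succ_apply', ih, Tstep_mk_zero, sum_matAbs_iterateGens A hF_nonneg,
      ← hF, iterateGens_succ]

end Iterate

/-- the `j`-fold iterate `𝕋_{ℐ_A}^j(ℐ_Δ)` equals, as a set, the matrix
zonotope with center `0` and generators `Â^{j−h} F_h^{(k)}`, `h = 0,…,j`, `(F_h^{(k)})_k = E(F_h)`. -/
theorem stmt4 {n p : ℕ} (Ahat ΔK : Matrix (Fin n) (Fin n) ℝ)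
    (ΔS : Matrix (Fin n) (Fin p) ℝ) (hΔK : ∀ i j, 0 ≤ ΔK i j) (hΔS : ∀ i j, 0 ≤ ΔS i j)
    (F : ℕ → Matrix (Fin n) (Fin p) ℝ) (hF0 : F 0 = ΔS)
    (hF : ∀ j, F (j + 1) = ΔK * ∑ i ∈ Finset.range (j + 1), matAbs (Ahat ^ (j - i)) * F i) :
    ∀ j : ℕ, ((Tstep Ahat ΔK)^[j] ⟨0, EList ΔS⟩).set =
      (ZRep.mk 0 ((List.range (j + 1)).flatMap fun h =>
        (EList (F h)).map fun X => Ahat ^ (j - h) * X)).set := by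
  intro j
  have hF_nonneg := recursion_nonneg Ahat ΔK F hΔK (hF0 ▸ hΔS) hF
  rw [← hF0, Tstep_iterate Ahat ΔK F hF_nonneg hF j]
  rfl
end
end

section
/- Let Â ∈ ℝ^{n×n}, Δ_K ∈ ℝ^{n×n} with Δ_K ≥ 0, and Δ_S ∈ ℝ^{n×p} with Δ_S ≥ 0. Define F_0 = Δ_S and F_{j+1} = Δ_K Σ_{i=0}^{j} |Â^{j−i}| F_i for j ≥ 0, and define P_1 = I_n and P_{j+1} = |Â^j| + Σ_{h=1}^{j} P_h Δ_K |Â^{j−h}| for j ≥ 1. Then F_j = Δ_K P_j Δ_S for every j ≥ 1. -/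
open Matrix Finset Pointwise

noncomputable section

/-! Write `Bⱼ = |Âʲ|` and `Qⱼ = P_{j+1}`. Over the ring of matrices, the recursion for `P` says
that the generating series satisfy `Q = B + X Q K B`. Since `X` is central, the push-through
identity `(1 - X B K) B = B (1 - X K B)` turns this into the mirrored recursion `Q = B + X B K Q`,
i.e. `Qⱼ = Bⱼ + Σ_{i<j} Bᵢ K Q_{j-1-i}`, and this is exactly what an induction on `j` needs to
unfold `F_{j+1} = K Σ_{i ≤ j} B_{j-i} Fᵢ` into `K Qⱼ Δ_S`. -/

theorem eq_add_mul_mul_of_eq_add_mul_mul {A : Type*} [Ring A] {q b c : A}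
    (hu : IsUnit (1 - c * b)) (h : q = b + q * c * b) : q = b + b * c * q := by
  have hq : q * (1 - c * b) = b := by
    rwa [mul_sub, mul_one, ← mul_assoc, sub_eq_iff_eq_add]
  have push_through : (1 - b * c) * b = b * (1 - c * b) := by
    simp only [sub_mul, mul_sub, one_mul, mul_one, mul_assoc]
  have : (1 - b * c) * q = b := by
    rw [← hu.mul_left_inj, mul_assoc, hq, push_through]
  rwa [sub_mul, one_mul, sub_eq_iff_eq_add] at this

namespace PowerSeries

variable {R : Type*} [Ring R]

theorem coeff_X_mul_mk_mul_C_mul_mk (a b : ℕ → R) (k : R) (m : ℕ) :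
    coeff m (X * mk a * C k * mk b) = ∑ i ∈ Finset.range m, a i * k * b (m - 1 - i) := by
  rw [mul_assoc, mul_assoc]
  rcases m with _ | m
  · simp
  · rw [coeff_succ_X_mul, ← mul_assoc, coeff_mul, Finset.Nat.sum_antidiagonal_eq_sum_range_succ
      (fun i j => coeff i (mk a * C k) * coeff j (mk b))]
    simp [coeff_mul_C]

theorem isUnit_one_sub_X_mul (φ : R⟦X⟧) : IsUnit (1 - X * φ) := by
  simp [isUnit_iff_constantCoeff]

end PowerSeries

open PowerSeries in
theorem right_recursion_of_left_recursion {R : Type*} [Ring R] {Q B : ℕ → R} (k : R)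
    (h : ∀ j, Q j = B j + ∑ i ∈ Finset.range j, Q i * k * B (j - 1 - i)) :
    ∀ j, Q j = B j + ∑ i ∈ Finset.range j, B i * k * Q (j - 1 - i) := by
  have hX : ∀ φ : R⟦X⟧, X * φ = φ * X := fun φ => (commute_X φ).symm.eq
  have left : PowerSeries.mk Q = .mk B + .mk Q * (X * C k) * .mk B := by
    ext j
    rw [← mul_assoc, ← hX, map_add, coeff_X_mul_mk_mul_C_mul_mk, coeff_mk, coeff_mk, h j]
  have right := eq_add_mul_mul_of_eq_add_mul_mul
    (by simpa only [mul_assoc] using isUnit_one_sub_X_mul (C k * .mk B)) left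
  intro j
  rw [← mul_assoc, ← hX] at right
  simpa [coeff_X_mul_mk_mul_C_mul_mk] using congr_arg (coeff j) right

theorem eq_mul_mul_of_sum_range_recursion {m p α : Type*} [Fintype m] [Semiring α]
    {K : Matrix m m α} {S : Matrix m p α} {B Q : ℕ → Matrix m m α} {F : ℕ → Matrix m p α}
    (hQ : ∀ j, Q j = B j + ∑ i ∈ Finset.range j, B i * K * Q (j - 1 - i)) (hF0 : F 0 = S)
    (hF : ∀ j, F (j + 1) = K * ∑ i ∈ Finset.range (j + 1), B (j - i) * F i) :
    ∀ j, F (j + 1) = K * Q j * S := by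
  intro j
  induction j using Nat.strong_induction_on with
  | _ j ih =>
  have reflect : ∑ i ∈ Finset.range (j + 1), B (j - i) * F i
      = ∑ i ∈ Finset.range (j + 1), B i * F (j - i) := by
    rw [← Finset.sum_range_reflect]
    exact Finset.sum_congr rfl fun i hi => by
      rw [Finset.mem_range] at hi
      congr 3; omega
  have unfold : ∀ i ∈ Finset.range j, B i * F (j - i) = B i * K * Q (j - 1 - i) * S := by
    intro i hi
    rw [Finset.mem_range] at hi
    rw [show j - i = j - 1 - i + 1 by omega, ih _ (by omega)]
    simp only [Matrix.mul_assoc]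
  rw [hF, reflect, Finset.sum_range_succ, Finset.sum_congr rfl unfold, Nat.sub_self, hF0, hQ j,
    Matrix.mul_assoc K, Matrix.add_mul, Matrix.sum_mul, add_comm]

theorem matAbs_one {ι : Type*} [DecidableEq ι] : matAbs (1 : Matrix ι ι ℝ) = 1 := by
  ext i j
  by_cases h : i = j <;> simp [matAbs, Matrix.one_apply, h]

theorem stmt5_general {n p : ℕ} (Ahat ΔK : Matrix (Fin n) (Fin n) ℝ)
    (ΔS : Matrix (Fin n) (Fin p) ℝ)
    (F : ℕ → Matrix (Fin n) (Fin p) ℝ) (hF0 : F 0 = ΔS)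
    (hF : ∀ j, F (j + 1) = ΔK * ∑ i ∈ Finset.range (j + 1), matAbs (Ahat ^ (j - i)) * F i)
    (P : ℕ → Matrix (Fin n) (Fin n) ℝ) (hP1 : P 1 = 1)
    (hP : ∀ j, 1 ≤ j →
      P (j + 1) = matAbs (Ahat ^ j) + ∑ h ∈ Finset.Icc 1 j, P h * ΔK * matAbs (Ahat ^ (j - h))) :
    ∀ j, 1 ≤ j → F j = ΔK * P j * ΔS := by
  have left : ∀ j, P (j + 1) = matAbs (Ahat ^ j)
      + ∑ i ∈ Finset.range j, P (i + 1) * ΔK * matAbs (Ahat ^ (j - 1 - i)) := by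
    rintro (_ | j)
    · simp [hP1, matAbs_one]
    · rw [hP _ le_add_self, ← Finset.Ico_add_one_right_eq_Icc, Finset.sum_Ico_eq_sum_range,
        Nat.add_sub_cancel]
      simp only [Nat.sub_sub, add_comm 1]
  intro j hj
  obtain ⟨j, rfl⟩ := Nat.exists_eq_add_of_le' hj
  exact eq_mul_mul_of_sum_range_recursion (right_recursion_of_left_recursion ΔK left) hF0 hF j

/-- Lemma 2: `F_j = Δ_K P_j Δ_S` for every `j ≥ 1`. -/
theorem stmt5 {n p : ℕ} (Ahat ΔK : Matrix (Fin n) (Fin n) ℝ)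
    (ΔS : Matrix (Fin n) (Fin p) ℝ) (hΔK : ∀ i j, 0 ≤ ΔK i j) (hΔS : ∀ i j, 0 ≤ ΔS i j)
    (F : ℕ → Matrix (Fin n) (Fin p) ℝ) (hF0 : F 0 = ΔS)
    (hF : ∀ j, F (j + 1) = ΔK * ∑ i ∈ Finset.range (j + 1), matAbs (Ahat ^ (j - i)) * F i)
    (P : ℕ → Matrix (Fin n) (Fin n) ℝ) (hP1 : P 1 = 1)
    (hP : ∀ j, 1 ≤ j →
      P (j + 1) = matAbs (Ahat ^ j) + ∑ h ∈ Finset.Icc 1 j, P h * ΔK * matAbs (Ahat ^ (j - h))) :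
    ∀ j, 1 ≤ j → F j = ΔK * P j * ΔS :=
  stmt5_general Ahat ΔK ΔS F hF0 hF P hP1 hP
end
end

section
/- Error-tube invariance: let Â ∈ ℝ^{n×n}, B̂ ∈ ℝ^{n×m}, K ∈ ℝ^{m×n}, Δ_S ∈ ℝ^{n×(n+m)} with Δ_S ≥ 0, w̄ ∈ ℝ^n with w̄ ≥ 0, and let A ∈ ℝ^{n×n}, B ∈ ℝ^{n×m} satisfy |[A B] − [Â B̂]| ≤ Δ_S entrywise. Set A_K = A + BK, A_Δ = A − Â, B_Δ = B − B̂, Â_K = Â + B̂K, ℐ_Δ = [±Δ_S], 𝒲 = [±w̄], and 𝒜_K = { Â_K + D[Iₙ; K] : |D| ≤ Δ_S }. Given sequences z(k) ∈ ℝ^n, v(k) ∈ ℝ^m, w(k) ∈ 𝒲, a sequence e(k) ∈ ℝ^n with e(k+1) = A_K e(k) + A_Δ z(k) + B_Δ v(k) + w(k), and sets 𝒮(k) ⊆ ℝ^n with 𝒮(k+1) = 𝒜_K 𝒮(k) ⊕ ℐ_Δ[z(k); v(k)] ⊕ 𝒲: if e(0) ∈ 𝒮(0), then e(k) ∈ 𝒮(k)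 for all k ≥ 0. -/
open Matrix Finset Pointwise

noncomputable section

/-- a vector of `ℝ^n` viewed as a column matrix -/
def colVec {n : ℕ} (w : Fin n → ℝ) : Matrix (Fin n) (Fin 1) ℝ := fun i _ => w i

/-- the set `𝒜_K = {Â_K + D[Iₙ; K] : |D| ≤ Δ_S}` -/
def AKset {n m : ℕ} (AhK : Matrix (Fin n) (Fin n) ℝ) (K : Matrix (Fin m) (Fin n) ℝ)
    (ΔS : Matrix (Fin n) (Fin n ⊕ Fin m) ℝ) : Set (Matrix (Fin n) (Fin n) ℝ) :=
  {X | ∃ D ∈ intervalMat 0 ΔS, X = AhK + D * Matrix.fromRows 1 K}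

/-
The true closed loop is one admissible member of the uncertainty description: its deviation
`D = [A - Â, B - B̂]` from the nominal model lies in `[±Δ_S]`. Since `D [Iₙ; K] = A_K - Â_K`, the
same `D` witnesses both `A_K ∈ 𝒜_K` and `[A_Δ B_Δ] [z; v] ∈ ℐ_Δ [z; v]`, so the error recursion is
one of the recursions generating the tube, and invariance follows by induction on `k`.
-/

theorem sub_mem_intervalMat_zero_iff {ι κ : Type*} {X C Δ : Matrix ι κ ℝ} :
    X - C ∈ intervalMat 0 Δ ↔ X ∈ intervalMat C Δ := by
  simp only [intervalMat, Set.mem_ofPred_eq, Matrix.sub_apply, Matrix.zero_apply, sub_zero]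

theorem fromCols_sub_fromCols {ι κ κ' : Type*}
    (A Ah : Matrix ι κ ℝ) (B Bh : Matrix ι κ' ℝ) :
    fromCols A B - fromCols Ah Bh = fromCols (A - Ah) (B - Bh) := by
  ext i (j | j) <;> rfl

theorem fromCols_sub_mem_intervalMat_zero {ι κ κ' : Type*}
    {A Ah : Matrix ι κ ℝ} {B Bh : Matrix ι κ' ℝ} {Δ : Matrix ι (κ ⊕ κ') ℝ}
    (hAB : fromCols A B ∈ intervalMat (fromCols Ah Bh) Δ) :
    fromCols (A - Ah) (B - Bh) ∈ intervalMat 0 Δ := by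
  rwa [← fromCols_sub_fromCols, sub_mem_intervalMat_zero_iff]

/- In `AKset` the untyped `1` lets the product elaborate through the `CStarMatrix` instance, which
`rw` cannot match against `Matrix` lemmas; this restatement fixes the instance. -/
theorem mem_AKset_iff {n m : ℕ} {X AhK : Matrix (Fin n) (Fin n) ℝ}
    {K : Matrix (Fin m) (Fin n) ℝ} {ΔS : Matrix (Fin n) (Fin n ⊕ Fin m) ℝ} :
    X ∈ AKset AhK K ΔS ↔
      ∃ D ∈ intervalMat 0 ΔS, X = AhK + D * fromRows (1 : Matrix (Fin n) (Fin n) ℝ) K :=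
  Iff.rfl

theorem add_mul_mem_AKset {n m : ℕ}
    {A Ah : Matrix (Fin n) (Fin n) ℝ} {B Bh : Matrix (Fin n) (Fin m) ℝ}
    (K : Matrix (Fin m) (Fin n) ℝ) {ΔS : Matrix (Fin n) (Fin n ⊕ Fin m) ℝ}
    (hAB : fromCols A B ∈ intervalMat (fromCols Ah Bh) ΔS) :
    A + B * K ∈ AKset (Ah + Bh * K) K ΔS := by
  refine mem_AKset_iff.2 ⟨_, fromCols_sub_mem_intervalMat_zero hAB, ?_⟩
  rw [fromCols_mul_fromRows]
  simp only [Matrix.sub_mul, Matrix.mul_one]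
  abel

theorem stmt12_general {n m : ℕ}
    (Ah : Matrix (Fin n) (Fin n) ℝ) (Bh : Matrix (Fin n) (Fin m) ℝ)
    (K : Matrix (Fin m) (Fin n) ℝ)
    (ΔS : Matrix (Fin n) (Fin n ⊕ Fin m) ℝ)
    (wbar : Fin n → ℝ)
    (A : Matrix (Fin n) (Fin n) ℝ) (B : Matrix (Fin n) (Fin m) ℝ)
    (hAB : ∀ i j, |Matrix.fromCols A B i j - Matrix.fromCols Ah Bh i j| ≤ ΔS i j)
    (z : ℕ → Matrix (Fin n) (Fin 1) ℝ) (v : ℕ → Matrix (Fin m) (Fin 1) ℝ)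
    (w : ℕ → Matrix (Fin n) (Fin 1) ℝ) (hw : ∀ k, w k ∈ intervalMat 0 (colVec wbar))
    (e : ℕ → Matrix (Fin n) (Fin 1) ℝ)
    (he : ∀ k, e (k + 1) =
      (A + B * K) * e k + (A - Ah) * z k + (B - Bh) * v k + w k)
    (S : ℕ → Set (Matrix (Fin n) (Fin 1) ℝ))
    (hS : ∀ k, S (k + 1) =
      {x | ∃ Am ∈ AKset (Ah + Bh * K) K ΔS, ∃ s ∈ S k, ∃ D ∈ intervalMat 0 ΔS,
        ∃ w' ∈ intervalMat 0 (colVec wbar),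
          x = Am * s + D * Matrix.fromRows (z k) (v k) + w'})
    (he0 : e 0 ∈ S 0) :
    ∀ k, e k ∈ S k := by
  intro k
  induction k with
  | zero => exact he0
  | succ k ih =>
    rw [hS k]
    refine ⟨A + B * K, add_mul_mem_AKset K hAB, e k, ih,
      _, fromCols_sub_mem_intervalMat_zero hAB, w k, hw k, ?_⟩
    rw [fromCols_mul_fromRows, he k, add_assoc ((A + B * K) * e k)]

/-- error-tube invariance: if `e(0) ∈ 𝒮(0)` then `e(k) ∈ 𝒮(k)` for all `k`. -/
theorem stmt12 {n m : ℕ}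
    (Ah : Matrix (Fin n) (Fin n) ℝ) (Bh : Matrix (Fin n) (Fin m) ℝ)
    (K : Matrix (Fin m) (Fin n) ℝ)
    (ΔS : Matrix (Fin n) (Fin n ⊕ Fin m) ℝ) (hΔS : ∀ i j, 0 ≤ ΔS i j)
    (wbar : Fin n → ℝ) (hwbar : ∀ i, 0 ≤ wbar i)
    (A : Matrix (Fin n) (Fin n) ℝ) (B : Matrix (Fin n) (Fin m) ℝ)
    (hAB : ∀ i j, |Matrix.fromCols A B i j - Matrix.fromCols Ah Bh i j| ≤ ΔS i j)
    (z : ℕ → Matrix (Fin n) (Fin 1) ℝ) (v : ℕ → Matrix (Fin m) (Fin 1) ℝ)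
    (w : ℕ → Matrix (Fin n) (Fin 1) ℝ) (hw : ∀ k, w k ∈ intervalMat 0 (colVec wbar))
    (e : ℕ → Matrix (Fin n) (Fin 1) ℝ)
    (he : ∀ k, e (k + 1) =
      (A + B * K) * e k + (A - Ah) * z k + (B - Bh) * v k + w k)
    (S : ℕ → Set (Matrix (Fin n) (Fin 1) ℝ))
    (hS : ∀ k, S (k + 1) =
      {x | ∃ Am ∈ AKset (Ah + Bh * K) K ΔS, ∃ s ∈ S k, ∃ D ∈ intervalMat 0 ΔS,
        ∃ w' ∈ intervalMat 0 (colVec wbar),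
          x = Am * s + D * Matrix.fromRows (z k) (v k) + w'})
    (he0 : e 0 ∈ S 0) :
    ∀ k, e k ∈ S k :=
  stmt12_general Ah Bh K ΔS wbar A B hAB z v w hw e he S hS he0
end
end

section
/- Robust polytopic constraint reformulation: let z ∈ ℝ^n, H ∈ ℝ^{r×n}, b ∈ ℝ^r, and for i = 0,…,j−1 let Δ_i ∈ ℝ^{n×p} with Δ_i ≥ 0 entrywise and ξ_i ∈ ℝ^p. Then the set inclusion {z} ⊕ Σ_{i=0}^{j−1} [±Δ_i]ξ_i ⊆ {x ∈ ℝ^n : Hx ≤ b} holds if and only if Hz + |H| Σ_{i=0}^{j−1} Δ_i |ξ_i| ≤ b, where [±Δ]ξ = {Dξ : |D| ≤ Δ} and ⊕ and Σ denote Minkowski sums. -/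
/-!
Everything reduces to a single row `a` of the constraint. The functional `x ↦ (H x)_a` is additive,
so its maximum over the Minkowski sum `{z} ⊕ Σ_i [±Δ_i]ξ_i` is `(H z)_a` plus the sum of its maxima
over the summands. On `[±Δ]ξ` we have `(H D ξ)_a = Σ_{k,l} H_{ak} D_{kl} ξ_l ≤ Σ_{k,l} |H_{ak}| Δ_{kl} |ξ_l|`,
with equality for `D_{kl} = sign(H_{ak}) Δ_{kl} sign(ξ_l)`, which lies in `[±Δ]` because `Δ ≥ 0`.
The inclusion holds iff every row maximum is at most `b_a`.
-/

open Matrix Finset Pointwise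

noncomputable section

section IsGreatest

variable {β : Type*} [AddCommMonoid β] [PartialOrder β] [IsOrderedAddMonoid β]

theorem IsGreatest.add {s t : Set β} {a b : β} (hs : IsGreatest s a) (ht : IsGreatest t b) :
    IsGreatest (s + t) (a + b) :=
  ⟨Set.add_mem_add hs.1 ht.1, by
    rintro _ ⟨x, hx, y, hy, rfl⟩
    exact add_le_add (hs.2 hx) (ht.2 hy)⟩

theorem isGreatest_finsetSum {ι : Type*} (t : Finset ι) {s : ι → Set β} {a : ι → β}
    (h : ∀ i ∈ t, IsGreatest (s i) (a i)) : IsGreatest (∑ i ∈ t, s i) (∑ i ∈ t, a i) := by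
  induction t using Finset.cons_induction with
  | empty => exact isGreatest_singleton
  | cons i t hi ih =>
    rw [sum_cons, sum_cons]
    exact (h i (mem_cons_self i t)).add (ih fun k hk => h k (mem_cons_of_mem hk))

end IsGreatest

section IntervalMat

variable {ι κ ν μ : Type*} [Fintype κ] [Fintype ν]

theorem mul_mul_apply_le_of_mem_intervalMat {H : Matrix ι κ ℝ} {D Δ : Matrix κ ν ℝ}
    (hD : D ∈ intervalMat 0 Δ) (ξ : Matrix ν μ ℝ) (a : ι) (c : μ) :
    (H * (D * ξ)) a c ≤ (matAbs H * (Δ * matAbs ξ)) a c := by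
  simp only [mul_apply, Finset.mul_sum, matAbs]
  refine sum_le_sum fun k _ => sum_le_sum fun l _ => ?_
  calc H a k * (D k l * ξ l c) ≤ |H a k| * (|D k l| * |ξ l c|) := by
        rw [← abs_mul, ← abs_mul]
        exact le_abs_self _
    _ ≤ |H a k| * (Δ k l * |ξ l c|) := by
        gcongr
        simpa using hD k l

theorem exists_mem_intervalMat_mul_mul_apply_eq {Δ : Matrix κ ν ℝ} (hΔ : ∀ k l, 0 ≤ Δ k l)
    (H : Matrix ι κ ℝ) (ξ : Matrix ν μ ℝ) (a : ι) (c : μ) :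
    ∃ D ∈ intervalMat 0 Δ, (H * (D * ξ)) a c = (matAbs H * (Δ * matAbs ξ)) a c := by
  refine ⟨of fun k l => SignType.sign (H a k) * Δ k l * SignType.sign (ξ l c), fun k l => ?_, ?_⟩
  · rw [of_apply, Matrix.zero_apply, sub_zero, abs_mul, abs_mul, abs_of_nonneg (hΔ k l)]
    have hsign : ∀ x : ℝ, |(SignType.sign x : ℝ)| ≤ 1 := fun x => by
      rcases lt_trichotomy x 0 with hx | rfl | hx <;> simp [*]
    calc |(SignType.sign (H a k) : ℝ)| * Δ k l * |(SignType.sign (ξ l c) : ℝ)|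
        ≤ 1 * Δ k l * 1 := by
          have := hΔ k l
          gcongr <;> exact hsign _
      _ = Δ k l := by ring
  · simp only [mul_apply, of_apply, Finset.mul_sum, matAbs]
    refine sum_congr rfl fun k _ => sum_congr rfl fun l _ => ?_
    rw [← self_mul_sign (H a k), ← self_mul_sign (ξ l c)]
    ring

theorem isGreatest_image_intervalMat {Δ : Matrix κ ν ℝ} (hΔ : ∀ k l, 0 ≤ Δ k l)
    (H : Matrix ι κ ℝ) (ξ : Matrix ν μ ℝ) (a : ι) (c : μ) :
    IsGreatest ((fun D => (H * (D * ξ)) a c) '' intervalMat 0 Δ)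
      ((matAbs H * (Δ * matAbs ξ)) a c) := by
  obtain ⟨D, hD, hDeq⟩ := exists_mem_intervalMat_mul_mul_apply_eq hΔ H ξ a c
  refine ⟨⟨D, hD, hDeq⟩, ?_⟩
  rintro _ ⟨D', hD', rfl⟩
  exact mul_mul_apply_le_of_mem_intervalMat hD' ξ a c

end IntervalMat

/-- robust polytopic constraint reformulation:
`{z} ⊕ Σ_{i<j} [±Δ_i]ξ_i ⊆ {x : Hx ≤ b}` iff `Hz + |H| Σ_{i<j} Δ_i |ξ_i| ≤ b`. -/
theorem stmt14 {n p r : ℕ} (z : Matrix (Fin n) (Fin 1) ℝ) (H : Matrix (Fin r) (Fin n) ℝ)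
    (b : Matrix (Fin r) (Fin 1) ℝ) (j : ℕ) (Δ : ℕ → Matrix (Fin n) (Fin p) ℝ)
    (hΔ : ∀ i, i < j → ∀ a c, 0 ≤ Δ i a c) (ξ : ℕ → Matrix (Fin p) (Fin 1) ℝ) :
    ({z} + ∑ i ∈ Finset.range j, (fun D => D * ξ i) '' intervalMat 0 (Δ i)) ⊆
        {x : Matrix (Fin n) (Fin 1) ℝ | ∀ a c, (H * x) a c ≤ b a c} ↔
      ∀ a c, (H * z + matAbs H * ∑ i ∈ Finset.range j, Δ i * matAbs (ξ i)) a c ≤ b a c := by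
  set S := {z} + ∑ i ∈ Finset.range j, (fun D => D * ξ i) '' intervalMat 0 (Δ i)
  have hmax : ∀ a c, IsGreatest ((fun x => (H * x) a c) '' S)
      ((H * z + matAbs H * ∑ i ∈ Finset.range j, Δ i * matAbs (ξ i)) a c) := by
    intro a c
    -- the row functional, bundled additively so that its images of Minkowski sums split
    let φ : Matrix (Fin n) (Fin 1) ℝ →+ ℝ :=
      (entryAddMonoidHom ℝ a c).comp (addMonoidHomMulLeft H)
    change IsGreatest (φ '' S) _
    rw [Set.image_add, Set.image_singleton, Set.image_finsetSum, Matrix.mul_sum, Matrix.add_apply,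
      Matrix.sum_apply]
    refine isGreatest_singleton.add (isGreatest_finsetSum _ fun i hi => ?_)
    rw [Set.image_image]
    exact isGreatest_image_intervalMat (hΔ i (mem_range.1 hi)) H (ξ i) a c
  refine ⟨fun h a c => ?_, fun h x hx a c => ?_⟩
  · obtain ⟨x, hx, hxmax⟩ := (hmax a c).1
    exact hxmax ▸ h hx a c
  · exact ((hmax a c).2 ⟨x, hx, rfl⟩).trans (h a c)
end
end
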